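/- For any integers d ≥ 1, ℓ ≥ 2, Δ ≥ d and any d-degenerate graph G of maximum degree at most Δ, the power graph G^ℓ is 2^{ℓ+2}·d^{⌈ℓ/2⌉}·Δ^{⌊ℓ/2⌋}-degenerate. -/

import Mathlib

/-- `G` is `d`-degenerate. -/
def IsDegenerate {V : Type*} (G : SimpleGraph V) (d : ℕ) : Prop :=
  ∀ s : Set V, s.Nonempty →
    ∃ v ∈ s, (s ∩ G.neighborSet v).Finite ∧ (s ∩ G.neighborSet v).ncard ≤ d

/-- `G` has maximum degree at most `Δ`. -/
def MaxDegreeLE {V : Type*} (G : SimpleGraph V) (Δ : ℕ) : Prop :=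
  ∀ v, (G.neighborSet v).Finite ∧ (G.neighborSet v).ncard ≤ Δ

/-- The power graph `G^ℓ`: two distinct vertices are adjacent iff some path of `G` with at
most `ℓ` edges contains both of them. -/
def powerGraph {V : Type*} (G : SimpleGraph V) (ℓ : ℕ) : SimpleGraph V where
  Adj v w := v ≠ w ∧ ∃ (a b : V) (p : G.Walk a b),
    p.IsPath ∧ p.length ≤ ℓ ∧ v ∈ p.support ∧ w ∈ p.support
  symm := by
    constructor
    rintro v w ⟨hne, a, b, p, hp, hl, hv, hw⟩
    exact ⟨hne.symm, a, b, p, hp, hl, hw, hv⟩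
  loopless := by
    constructor
    rintro v ⟨hne, -⟩
    exact hne rfl

/-!
Order the vertices so that each has at most `d` neighbours above it. Reading a walk backwards
from its last vertex, a descending step leaves at most `d` choices for the previous vertex and an
ascending step at most `Δ`; hence at most `2^k d^(k-j) Δ^min(j,k)` vertices reach a fixed `w` by a
walk of length `k` with at most `j` ascents. A walk and its reverse together have as many ascents
as steps, so every edge of `G^ℓ` can be oriented so that its tail reaches its head by a walk of
length at most `ℓ` with at most `⌊ℓ/2⌋` ascents. Every vertex then has in-degree below
`2^(ℓ+1) d^⌈ℓ/2⌉ Δ^⌊ℓ/2⌋`, so every induced subgraph of `G^ℓ` has average degree below twice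
that bound.
-/

open Finset

namespace SimpleGraph

variable {V : Type*} {G : SimpleGraph V}

namespace Walk

def ascents (f : V → ℕ) {u v : V} (p : G.Walk u v) : ℕ :=
  p.darts.countP fun e => f e.fst < f e.snd

lemma ascents_cons (f : V → ℕ) {u v w : V} (h : G.Adj u v) (p : G.Walk v w) :
    (cons h p).ascents f = p.ascents f + if f u < f v then 1 else 0 := by
  simp [ascents, List.countP_cons]

lemma ascents_add_ascents_reverse {f : V → ℕ} (hf : Function.Injective f) {u v : V}
    (p : G.Walk u v) : p.ascents f + p.reverse.ascents f = p.length := by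
  rw [ascents, ascents, darts_reverse, List.countP_reverse, List.countP_map, ← length_darts,
    List.length_eq_countP_add_countP (fun e => decide (f e.fst < f e.snd))]
  congr 1
  refine List.countP_congr fun e _ => ?_
  simpa using (hf.ne e.adj.ne.symm).le_iff_lt.symm

lemma exists_walk_length_le_of_mem_support {a b x w : V} (p : G.Walk a b)
    (hx : x ∈ p.support) (hw : w ∈ p.support) : ∃ q : G.Walk x w, q.length ≤ p.length := by
  classical
  by_cases hw' : w ∈ (p.dropUntil x hx).support
  · exact ⟨(p.dropUntil x hx).takeUntil w hw',
      (length_takeUntil_le_length _ hw').trans (length_dropUntil_le_length _ hx)⟩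
  · have hw'' : w ∈ (p.takeUntil x hx).support := by
      rw [← take_spec p hx, mem_support_append_iff] at hw
      exact hw.resolve_right hw'
    refine ⟨((p.takeUntil x hx).dropUntil w hw'').reverse, ?_⟩
    rw [length_reverse]
    exact (length_dropUntil_le_length _ hw'').trans (length_takeUntil_le_length _ hx)

end Walk

end SimpleGraph

open scoped Classical in
theorem IsDegenerate.exists_rank_on {V : Type*} {G : SimpleGraph V} {d : ℕ}
    (hG : IsDegenerate G d) (s : Finset V) :
    ∃ f : V → ℕ, Set.InjOn f s ∧ ∀ v ∈ s, #{u ∈ s | G.Adj v u ∧ f v < f u} ≤ d := by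
  induction s using Finset.strongInduction with
  | H s ih =>
  rcases s.eq_empty_or_nonempty with rfl | hs
  · simp
  obtain ⟨v, hv, -, hvd⟩ := hG s (by exact_mod_cast hs)
  obtain ⟨g, hg, hgd⟩ := ih (s.erase v) (s.erase_ssubset hv)
  -- With `v` ranked lowest, its upper neighbours are its neighbours in `s`, and it is nobody's
  -- upper neighbour.
  let f : V → ℕ := fun u => if u = v then 0 else g u + 1
  refine ⟨f, fun x hx y hy hxy => ?_, fun u hu => ?_⟩
  · by_cases hxv : x = v <;> by_cases hyv : y = v <;> simp only [f, hxv, hyv, if_true,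
      if_false] at hxy ⊢
    all_goals first | omega | exact hg (by simp [hxv, hx]) (by simp [hyv, hy]) (by omega)
  · by_cases huv : u = v
    · subst huv
      have hvd' : #{w ∈ s | G.Adj u w} ≤ d := by
        rw [← Set.ncard_coe_finset]
        convert hvd using 2
        ext w; simp [SimpleGraph.mem_neighborSet]
      refine le_trans (card_le_card fun w hw => ?_) hvd'
      simp only [mem_filter] at hw ⊢
      exact ⟨hw.1, hw.2.1⟩
    · refine le_trans (card_le_card fun w hw => ?_) (hgd u (mem_erase.2 ⟨huv, hu⟩))
      obtain ⟨hws, hadj, hlt⟩ := mem_filter.1 hw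
      have hwv : w ≠ v := by rintro rfl; simp [f, huv] at hlt
      simp only [f, huv, hwv, if_false] at hlt
      exact mem_filter.2 ⟨mem_erase.2 ⟨hwv, hws⟩, hadj, by omega⟩

open scoped Classical in
theorem IsDegenerate.exists_rank {V : Type*} [Fintype V] {G : SimpleGraph V} {d : ℕ}
    (hG : IsDegenerate G d) :
    ∃ f : V → ℕ, Function.Injective f ∧ ∀ v, #{u | G.Adj v u ∧ f v < f u} ≤ d := by
  obtain ⟨f, hf, hfd⟩ := hG.exists_rank_on univ
  exact ⟨f, by simpa using hf, fun v => hfd v (mem_univ v)⟩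

open scoped Classical in
theorem MaxDegreeLE.card_adj_le {V : Type*} [Fintype V] {G : SimpleGraph V} {Δ : ℕ}
    (hG : MaxDegreeLE G Δ) (v : V) : #{u | G.Adj v u} ≤ Δ := by
  rw [← Set.ncard_coe_finset]
  convert (hG v).2
  ext u; simp [SimpleGraph.mem_neighborSet]

namespace SimpleGraph

open scoped Classical

variable {V : Type*} [Fintype V] (G : SimpleGraph V)

noncomputable def walkStarts (f : V → ℕ) (w : V) (k j : ℕ) : Finset V :=
  {x | ∃ p : G.Walk x w, p.length = k ∧ p.ascents f ≤ j}

variable {G} {f : V → ℕ} {w : V} {d Δ : ℕ}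

lemma walkStarts_zero_subset (j : ℕ) : G.walkStarts f w 0 j ⊆ {w} := by
  intro x hx
  obtain ⟨p, hp, -⟩ := (mem_filter.1 hx).2
  simp [Walk.eq_of_length_eq_zero hp]

lemma exists_adj_of_mem_walkStarts_succ (hf : Function.Injective f) {k j : ℕ} {x : V}
    (hx : x ∈ G.walkStarts f w (k + 1) j) :
    ∃ y, G.Adj x y ∧ (f y < f x ∧ y ∈ G.walkStarts f w k j ∨
      j ≠ 0 ∧ y ∈ G.walkStarts f w k (j - 1)) := by
  obtain ⟨p, hp, hj⟩ := (mem_filter.1 hx).2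
  cases p with
  | nil => simp at hp
  | cons h q =>
    rw [Walk.ascents_cons] at hj
    rw [Walk.length_cons, Nat.add_right_cancel_iff] at hp
    refine ⟨_, h, ?_⟩
    rcases (hf.ne h.ne).lt_or_gt with hlt | hgt
    · rw [if_pos hlt] at hj
      exact .inr ⟨by omega, mem_filter.2 ⟨mem_univ _, q, hp, by omega⟩⟩
    · rw [if_neg hgt.not_gt] at hj
      exact .inl ⟨hgt, mem_filter.2 ⟨mem_univ _, q, hp, by omega⟩⟩

variable (hf : Function.Injective f) (hup : ∀ v, #{u | G.Adj v u ∧ f v < f u} ≤ d)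
  (hnbr : ∀ v, #{u | G.Adj v u} ≤ Δ)
include hf hup

lemma card_walkStarts_succ_zero_le (k : ℕ) :
    #(G.walkStarts f w (k + 1) 0) ≤ #(G.walkStarts f w k 0) * d := by
  refine le_trans (card_le_card fun x hx => ?_)
    (card_biUnion_le_card_mul _ (fun y => {u | G.Adj y u ∧ f y < f u}) d fun y _ => hup y)
  obtain ⟨y, hxy, ⟨hlt, hy⟩ | ⟨hj, -⟩⟩ := exists_adj_of_mem_walkStarts_succ hf hx
  · exact mem_biUnion.2 ⟨y, hy, by simp [hxy.symm, hlt]⟩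
  · exact absurd rfl hj

include hnbr in
lemma card_walkStarts_succ_succ_le (k j : ℕ) :
    #(G.walkStarts f w (k + 1) (j + 1)) ≤
      #(G.walkStarts f w k (j + 1)) * d + #(G.walkStarts f w k j) * Δ := by
  refine le_trans (card_le_card fun x hx => ?_) ((card_union_le _ _).trans (add_le_add
    (card_biUnion_le_card_mul _ (fun y => {u | G.Adj y u ∧ f y < f u}) d fun y _ => hup y)
    (card_biUnion_le_card_mul _ (fun y => {u | G.Adj y u}) Δ fun y _ => hnbr y)))
  obtain ⟨y, hxy, ⟨hlt, hy⟩ | ⟨-, hy⟩⟩ := exists_adj_of_mem_walkStarts_succ hf hx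
  · exact mem_union_left _ (mem_biUnion.2 ⟨y, hy, by simp [hxy.symm, hlt]⟩)
  · exact mem_union_right _ (mem_biUnion.2 ⟨y, hy, by simp [hxy.symm]⟩)

include hnbr in
theorem card_walkStarts_le (hdΔ : d ≤ Δ) (k j : ℕ) :
    #(G.walkStarts f w k j) ≤ 2 ^ k * d ^ (k - j) * Δ ^ min j k := by
  induction k generalizing j with
  | zero => simpa using card_le_card (walkStarts_zero_subset j)
  | succ k ih =>
    cases j with
    | zero =>
      calc #(G.walkStarts f w (k + 1) 0) ≤ 2 ^ k * d ^ k * 1 * d := by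
            simpa using (card_walkStarts_succ_zero_le hf hup k).trans
              (Nat.mul_le_mul_right d (ih 0))
        _ = 2 ^ k * d ^ (k + 1) := by ring
        _ ≤ 2 ^ (k + 1) * d ^ (k + 1) := by gcongr <;> omega
        _ = 2 ^ (k + 1) * d ^ (k + 1 - 0) * Δ ^ min 0 (k + 1) := by simp
    | succ j =>
      refine (card_walkStarts_succ_succ_le hf hup hnbr k j).trans
        ((add_le_add (Nat.mul_le_mul_right d (ih (j + 1)))
          (Nat.mul_le_mul_right Δ (ih j))).trans ?_)
      rcases lt_or_ge j k with hjk | hkj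
      · obtain ⟨m, rfl⟩ := Nat.exists_eq_add_of_lt hjk
        rw [show j + m + 1 - (j + 1) = m by omega, show j + m + 1 - j = m + 1 by omega,
          show j + m + 1 + 1 - (j + 1) = m + 1 by omega, min_eq_left (by omega),
          min_eq_left (by omega), min_eq_left (by omega)]
        exact le_of_eq (by ring)
      · rw [Nat.sub_eq_zero_of_le (by omega), Nat.sub_eq_zero_of_le hkj,
          Nat.sub_eq_zero_of_le (by omega), min_eq_right (by omega), min_eq_right hkj,
          min_eq_right (by omega)]
        calc 2 ^ k * d ^ 0 * Δ ^ k * d + 2 ^ k * d ^ 0 * Δ ^ k * Δ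
            ≤ 2 ^ k * d ^ 0 * Δ ^ k * Δ + 2 ^ k * d ^ 0 * Δ ^ k * Δ := by gcongr
          _ = 2 ^ (k + 1) * d ^ 0 * Δ ^ (k + 1) := by ring

include hnbr in
theorem card_starts_of_few_ascents_le (hd : 1 ≤ d) (hdΔ : d ≤ Δ) (ℓ : ℕ) :
    #{x | ∃ p : G.Walk x w, p.length ≤ ℓ ∧ p.ascents f ≤ ℓ / 2} ≤
      2 ^ (ℓ + 1) * (d ^ ((ℓ + 1) / 2) * Δ ^ (ℓ / 2)) :=
  calc _ ≤ #((range (ℓ + 1)).biUnion fun k => G.walkStarts f w k (ℓ / 2)) := by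
        refine card_le_card fun x hx => ?_
        obtain ⟨p, hpℓ, hp⟩ := (mem_filter.1 hx).2
        exact mem_biUnion.2
          ⟨p.length, mem_range.2 (by omega), mem_filter.2 ⟨mem_univ _, p, rfl, hp⟩⟩
    _ ≤ ∑ k ∈ range (ℓ + 1), 2 ^ k * (d ^ ((ℓ + 1) / 2) * Δ ^ (ℓ / 2)) := by
        refine card_biUnion_le.trans (sum_le_sum fun k hk => ?_)
        rw [← mul_assoc]
        refine (card_walkStarts_le hf hup hnbr hdΔ k (ℓ / 2)).trans ?_
        have := mem_range.1 hk
        gcongr <;> omega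
    _ ≤ 2 ^ (ℓ + 1) * (d ^ ((ℓ + 1) / 2) * Δ ^ (ℓ / 2)) := by
        rw [← sum_mul]
        gcongr
        exact (Nat.geomSum_lt le_rfl fun k hk => mem_range.1 hk).le

end SimpleGraph

open scoped Classical in
theorem isDegenerate_two_mul_of_orientation {V : Type*} [Fintype V] (H : SimpleGraph V)
    (R : V → V → Prop) (hR : ∀ x w, H.Adj x w → R x w ∨ R w x) {C : ℕ}
    (hC : ∀ w, #{x | R x w} ≤ C) : IsDegenerate H (2 * C) := by
  intro s hs
  set t := s.toFinite.toFinset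
  have hsum : ∑ x ∈ t, #{w ∈ t | H.Adj x w} ≤ ∑ _x ∈ t, 2 * C :=
    calc ∑ x ∈ t, #{w ∈ t | H.Adj x w}
        ≤ ∑ x ∈ t, (#(t.bipartiteAbove R x) + #(t.bipartiteBelow R x)) := by
          refine sum_le_sum fun x _ => (card_le_card fun w hw => ?_).trans (card_union_le _ _)
          obtain ⟨hwt, hxw⟩ := mem_filter.1 hw
          rcases hR x w hxw with h | h
          · exact mem_union_left _ (mem_filter.2 ⟨hwt, h⟩)
          · exact mem_union_right _ (mem_filter.2 ⟨hwt, h⟩)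
      _ = ∑ x ∈ t, 2 * #(t.bipartiteBelow R x) := by
          rw [sum_add_distrib, sum_card_bipartiteAbove_eq_sum_card_bipartiteBelow,
            ← sum_add_distrib]
          simp only [two_mul]
      _ ≤ ∑ _x ∈ t, 2 * C := by
          gcongr with x
          exact (card_le_card (filter_subset_filter _ (subset_univ t))).trans (hC x)
  obtain ⟨x, hx, hle⟩ := exists_le_of_sum_le (by simpa [t] using hs) hsum
  refine ⟨x, by simpa [t] using hx, Set.toFinite _, ?_⟩
  have hinter : s ∩ H.neighborSet x = ↑({w ∈ t | H.Adj x w}) := by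
    ext w; simp [t]
  rwa [hinter, Set.ncard_coe_finset]

theorem exists_walk_ascents_le_of_powerGraph_adj {V : Type*} {G : SimpleGraph V} {f : V → ℕ}
    (hf : Function.Injective f) {ℓ : ℕ} {x w : V} (h : (powerGraph G ℓ).Adj x w) :
    (∃ p : G.Walk x w, p.length ≤ ℓ ∧ p.ascents f ≤ ℓ / 2) ∨
      ∃ p : G.Walk w x, p.length ≤ ℓ ∧ p.ascents f ≤ ℓ / 2 := by
  obtain ⟨-, a, b, p, -, hpℓ, hx, hw⟩ := h
  obtain ⟨q, hq⟩ := p.exists_walk_length_le_of_mem_support hx hw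
  have := q.ascents_add_ascents_reverse hf
  by_cases hasc : q.ascents f ≤ ℓ / 2
  · exact .inl ⟨q, by omega, hasc⟩
  · exact .inr ⟨q.reverse, by rw [SimpleGraph.Walk.length_reverse]; omega, by omega⟩

theorem stmt11_general {V : Type*} [Fintype V] (G : SimpleGraph V) (d ℓ Δ : ℕ)
    (hd : 1 ≤ d) (hΔ : d ≤ Δ)
    (hdeg : IsDegenerate G d) (hmax : MaxDegreeLE G Δ) :
    IsDegenerate (powerGraph G ℓ) (2 ^ (ℓ + 2) * d ^ ((ℓ + 1) / 2) * Δ ^ (ℓ / 2)) := by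
  obtain ⟨f, hf, hup⟩ := hdeg.exists_rank
  have key := isDegenerate_two_mul_of_orientation (powerGraph G ℓ)
    (fun x w => ∃ p : G.Walk x w, p.length ≤ ℓ ∧ p.ascents f ≤ ℓ / 2)
    (fun _ _ => exists_walk_ascents_le_of_powerGraph_adj hf)
    (fun _ => G.card_starts_of_few_ascents_le hf hup hmax.card_adj_le hd hΔ ℓ)
  convert key using 1
  ring

/-- For d ≥ 1, ℓ ≥ 2, Δ ≥ d and a d-degenerate graph G of maximum degree at most Δ, the
power graph G^ℓ is 2^(ℓ+2)·d^⌈ℓ/2⌉·Δ^⌊ℓ/2⌋-degenerate. -/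
theorem stmt11 {V : Type*} [Fintype V] (G : SimpleGraph V) (d ℓ Δ : ℕ)
    (hd : 1 ≤ d) (hℓ : 2 ≤ ℓ) (hΔ : d ≤ Δ)
    (hdeg : IsDegenerate G d) (hmax : MaxDegreeLE G Δ) :
    IsDegenerate (powerGraph G ℓ) (2 ^ (ℓ + 2) * d ^ ((ℓ + 1) / 2) * Δ ^ (ℓ / 2)) :=
  stmt11_general G d ℓ Δ hd hΔ hdeg hmax
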